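/- Let H be a digraph containing the directed triangle →C_3 as a subdigraph and let F be an oriented forest whose underlying undirected graph contains an induced path on 4 vertices. Then the set {↔K_2, H, F} is not heroic: for every integer c there exists an oriented graph with no induced copy of H and no induced copy of F whose dichromatic number exceeds c. -/

import Mathlib

/-- A directed cycle (length at least 2, pairwise distinct vertices) in the digraph
with arc relation `A`; a digon counts as a directed cycle of length 2. -/
def HasDicycle {V : Type*} (A : V → V → Prop) : Prop :=
  ∃ (n : ℕ) (f : Fin (n + 2) → V), Function.Injective f ∧
    ∀ i : Fin (n + 2), A (f i) (f (i + 1))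

/-- `c` is a dicoloring of the digraph `A`: no color class contains a directed cycle. -/
def IsDicoloring {V : Type*} (A : V → V → Prop) {k : ℕ} (c : V → Fin k) : Prop :=
  ¬ HasDicycle (fun x y => A x y ∧ c x = c y)

/-- The dichromatic number of the digraph `A`: the least number of colors in a dicoloring. -/
noncomputable def dichromaticNumber {V : Type*} (A : V → V → Prop) : ℕ :=
  sInf {k : ℕ | ∃ c : V → Fin k, IsDicoloring A c}

/-- The digraph `B` appears as an induced subdigraph of the digraph `A`. -/
def HasInducedCopy {V W : Type*} (A : V → V → Prop) (B : W → W → Prop) : Prop :=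
  ∃ f : W → V, Function.Injective f ∧ ∀ x y, B x y ↔ A (f x) (f y)

/-- An oriented graph: at most one arc between any pair of vertices
(in particular no loops and no digons). -/
def IsOrientedGraph {V : Type*} (A : V → V → Prop) : Prop :=
  ∀ x y, A x y → ¬ A y x

/-- The complete symmetric digraph `↔K_k` (all digons present). -/
def symK (k : ℕ) : Fin k → Fin k → Prop := fun x y => x ≠ y

/-- The arcless digraph `K̄_k`. -/
def emptyK (k : ℕ) : Fin k → Fin k → Prop := fun _ _ => False

/-- The transitive tournament `TT_t` (note `TT_2 = →K_2`). -/
def transTour (t : ℕ) : Fin t → Fin t → Prop := fun x y => x < y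

/-- The directed triangle `→C_3`. -/
def dirC3 : Fin 3 → Fin 3 → Prop := fun x y => (y : ℕ) = ((x : ℕ) + 1) % 3

/-- The directed path `P^+(k)`: `k` arcs all oriented in the same direction, on `k+1` vertices. -/
def dirPath (k : ℕ) : Fin (k + 1) → Fin (k + 1) → Prop := fun x y => (x : ℕ) + 1 = (y : ℕ)

/-- `→K_2 + K_1`: a single arc together with an isolated vertex. -/
def K2plusK1 : Fin 3 → Fin 3 → Prop := fun x y => x = 0 ∧ y = 1

/-- `S_2^+`: the oriented star with two arcs leaving the center. -/
def S2plus : Fin 3 → Fin 3 → Prop := fun x y => x = 0 ∧ (y = 1 ∨ y = 2)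

/-- `S_2^-`: the oriented star with two arcs entering the center. -/
def S2minus : Fin 3 → Fin 3 → Prop := fun x y => (x = 1 ∨ x = 2) ∧ y = 0

/-- The oriented graph `R` on vertices `a,…,g = 0,…,6` with arcs
`a→b, b→c, c→a, b→d, d→a, c→e, e→b, f→d, d→g, g→f, f→e, e→g`. -/
def Rdigraph : Fin 7 → Fin 7 → Prop := fun x y =>
  (x = 0 ∧ y = 1) ∨ (x = 1 ∧ y = 2) ∨ (x = 2 ∧ y = 0) ∨ (x = 1 ∧ y = 3) ∨ (x = 3 ∧ y = 0) ∨
  (x = 2 ∧ y = 4) ∨ (x = 4 ∧ y = 1) ∨ (x = 5 ∧ y = 3) ∨ (x = 3 ∧ y = 6) ∨ (x = 6 ∧ y = 5) ∨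
  (x = 5 ∧ y = 4) ∨ (x = 4 ∧ y = 6)

/-- The adjacency pattern of the (undirected) path on `4` vertices. -/
def pathGraph4 : Fin 4 → Fin 4 → Prop := fun x y =>
  (x : ℕ) + 1 = (y : ℕ) ∨ (y : ℕ) + 1 = (x : ℕ)

/-- The underlying undirected graph of `A` contains the pattern `P` as an induced subgraph. -/
def HasInducedUCopy {V W : Type*} (A : V → V → Prop) (P : W → W → Prop) : Prop :=
  ∃ f : W → V, Function.Injective f ∧ ∀ x y, P x y ↔ (A (f x) (f y) ∨ A (f y) (f x))

/-- The underlying undirected graph of `A` is triangle-free. -/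
def UTriangleFree {V : Type*} (A : V → V → Prop) : Prop :=
  ¬ ∃ x y z : V, (A x y ∨ A y x) ∧ (A y z ∨ A z y) ∧ (A x z ∨ A z x)

/-- The underlying undirected graph of `A` contains no `K_4`. -/
def UK4Free {V : Type*} (A : V → V → Prop) : Prop :=
  ¬ ∃ a b c d : V, (A a b ∨ A b a) ∧ (A a c ∨ A c a) ∧ (A a d ∨ A d a) ∧
    (A b c ∨ A c b) ∧ (A b d ∨ A d b) ∧ (A c d ∨ A d c)

/-- The underlying undirected (simple) graph of the digraph `A`. -/
def underlyingGraph {V : Type*} (A : V → V → Prop) : SimpleGraph V where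
  Adj x y := x ≠ y ∧ (A x y ∨ A y x)
  symm := ⟨fun x y h => ⟨Ne.symm h.1, h.2.symm⟩⟩
  loopless := ⟨fun _ h => h.1 rfl⟩


/-!
Iterate the following construction: take `k + 2` disjoint copies of a digraph `D` that is not
`k`-dicolourable, and for each copy `a` add a hub vertex receiving all arcs from copy `a` and
sending arcs to all other copies. The hubs form an independent set joined to everything else, so
the underlying graph stays `P₄`-free (a cograph) and no directed triangle appears. In a
`(k + 1)`-dicolouring every copy uses every colour, and two hubs `a ≠ b` of the same colour close
a monochromatic directed `4`-cycle `a → (copy b) → b → (copy a) → a`.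
-/

open Function

section Dicolorings

variable {V W : Type*}

theorem HasDicycle.map {R : V → V → Prop} {S : W → W → Prop} {g : V → W} (hg : Injective g)
    (harc : ∀ x y, R x y → S (g x) (g y)) : HasDicycle R → HasDicycle S := by
  rintro ⟨n, f, hf, hR⟩
  exact ⟨n, g ∘ f, hg.comp hf, fun i => harc _ _ (hR i)⟩

theorem hasDicycle_of_cycle4 {R : V → V → Prop} {a b c d : V} (hab : a ≠ b) (hac : a ≠ c)
    (had : a ≠ d) (hbc : b ≠ c) (hbd : b ≠ d) (hcd : c ≠ d)
    (h₁ : R a b) (h₂ : R b c) (h₃ : R c d) (h₄ : R d a) : HasDicycle R := by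
  refine ⟨2, ![a, b, c, d], fun s t hst => ?_, fun i => ?_⟩
  · fin_cases s <;> fin_cases t <;> simp_all [eq_comm]
  · fin_cases i <;> assumption

theorem IsDicoloring.comp {A : V → V → Prop} {B : W → W → Prop} {k : ℕ} {c : W → Fin k}
    (hc : IsDicoloring B c) {g : V → W} (hg : Injective g)
    (harc : ∀ x y, A x y → B (g x) (g y)) : IsDicoloring A (c ∘ g) :=
  fun hcyc => hc (hcyc.map hg fun x y hxy => ⟨harc x y hxy.1, hxy.2⟩)

theorem IsDicoloring.comp_left {A : V → V → Prop} {k l : ℕ} {c : V → Fin k}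
    (hc : IsDicoloring A c) {φ : Fin k → Fin l} (hφ : Injective φ) : IsDicoloring A (φ ∘ c) :=
  fun hcyc => hc (hcyc.map injective_id fun _ _ hxy => ⟨hxy.1, hφ hxy.2⟩)

theorem isDicoloring_of_injective (A : V → V → Prop) {k : ℕ} {c : V → Fin k}
    (hc : Injective c) : IsDicoloring A c := by
  rintro ⟨n, f, hf, harc⟩
  exact absurd (hf (hc (harc 0).2)) (by simp)

theorem IsDicoloring.surjective {A : V → V → Prop} {k : ℕ}
    (hA : ∀ c : V → Fin k, ¬ IsDicoloring A c) {c : V → Fin (k + 1)} (hc : IsDicoloring A c) :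
    Surjective c := by
  intro t
  by_contra! hne
  choose c' hc' using fun u => Fin.exists_succAbove_eq (hne u)
  refine hA c' fun hcyc => hc (hcyc.map injective_id fun x y hxy => ⟨hxy.1, ?_⟩)
  change c x = c y
  rw [← hc' x, ← hc' y, hxy.2]

theorem lt_dichromaticNumber [Finite V] {A : V → V → Prop} {k : ℕ}
    (hA : ∀ c : V → Fin k, ¬ IsDicoloring A c) : k < dichromaticNumber A := by
  have hne : {l | ∃ c : V → Fin l, IsDicoloring A c}.Nonempty :=
    ⟨_, _, isDicoloring_of_injective A (Finite.equivFin V).injective⟩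
  obtain ⟨c, hc⟩ := Nat.sInf_mem hne
  by_contra! hle
  exact hA _ (hc.comp_left (Fin.castLE_injective hle))

end Dicolorings

section InducedCopies

variable {V W U : Type*}

def DirTriangleFree (A : V → V → Prop) : Prop :=
  ∀ x y z, A x y → A y z → A z x → False

theorem DirTriangleFree.comap {A : V → V → Prop} (hA : DirTriangleFree A) (g : W → V) :
    DirTriangleFree fun x y => A (g x) (g y) :=
  fun _ _ _ => hA _ _ _

theorem DirTriangleFree.not_hasInducedCopy {A : V → V → Prop} (hA : DirTriangleFree A)
    {B : W → W → Prop} (hB : ∃ x y z, B x y ∧ B y z ∧ B z x) : ¬ HasInducedCopy A B := by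
  rintro ⟨f, -, hf⟩
  obtain ⟨x, y, z, hxy, hyz, hzx⟩ := hB
  exact hA _ _ _ ((hf x y).1 hxy) ((hf y z).1 hyz) ((hf z x).1 hzx)

theorem HasInducedCopy.hasInducedUCopy {A : V → V → Prop} {B : W → W → Prop}
    {P : U → U → Prop} (hAB : HasInducedCopy A B) (hBP : HasInducedUCopy B P) :
    HasInducedUCopy A P := by
  obtain ⟨f, hf, hfB⟩ := hAB
  obtain ⟨g, hg, hgP⟩ := hBP
  exact ⟨f ∘ g, hf.comp hg, fun x y => (hgP x y).trans (or_congr (hfB _ _) (hfB _ _))⟩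

theorem HasInducedUCopy.of_comap {A : V → V → Prop} {P : U → U → Prop} {g : W → V}
    (hg : Injective g) (hP : HasInducedUCopy (fun x y => A (g x) (g y)) P) :
    HasInducedUCopy A P := by
  obtain ⟨f, hf, hfP⟩ := hP
  exact ⟨g ∘ f, hg.comp hf, hfP⟩

/-- `P₄` is not the join of a nonempty independent set `{x | s x}` with the other vertices. -/
theorem pathGraph4_eq_false_of_independent_of_complete (s : Fin 4 → Bool)
    (hind : ∀ x y, pathGraph4 x y → s x → ¬ s y) (hcompl : ∀ x y, ¬ pathGraph4 x y → s x → s y)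
    (x : Fin 4) : s x = false := by
  revert s x
  unfold pathGraph4
  decide

end InducedCopies

section HubJoin

variable {ι V : Type*}

def hubJoin (ι : Type*) (A : V → V → Prop) : (ι × V) ⊕ ι → (ι × V) ⊕ ι → Prop
  | .inl (i, u), .inl (j, v) => i = j ∧ A u v
  | .inl (i, _), .inr a => i = a
  | .inr a, .inl (j, _) => a ≠ j
  | .inr _, .inr _ => False

theorem hubJoin_inl_inl (A : V → V → Prop) (p q : ι × V) :
    hubJoin ι A (.inl p) (.inl q) ↔ p.1 = q.1 ∧ A p.2 q.2 :=
  Iff.rfl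

theorem hubJoin_inr_or_inl (A : V → V → Prop) (a : ι) (p : ι × V) :
    hubJoin ι A (.inr a) (.inl p) ∨ hubJoin ι A (.inl p) (.inr a) :=
  (em (a = p.1)).symm.imp id Eq.symm

theorem IsOrientedGraph.hubJoin {A : V → V → Prop} (hA : IsOrientedGraph A) :
    IsOrientedGraph (hubJoin ι A)
  | .inl (_, u), .inl (_, v), hxy, hyx => hA u v hxy.2 hyx.2
  | .inl _, .inr _, hxy, hyx => hyx hxy.symm
  | .inr _, .inl _, hxy, hyx => hxy hyx.symm
  | .inr _, .inr _, hxy, _ => hxy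

theorem DirTriangleFree.hubJoin {A : V → V → Prop} (hA : DirTriangleFree A) :
    DirTriangleFree (hubJoin ι A)
  | .inl (_, u), .inl (_, v), .inl (_, w), h₁, h₂, h₃ => hA u v w h₁.2 h₂.2 h₃.2
  | .inl _, .inl _, .inr _, h₁, h₂, h₃ => h₃ (h₁.1.trans h₂).symm
  | .inl _, .inr _, .inl _, h₁, h₂, h₃ => h₂ (h₁.symm.trans h₃.1.symm)
  | .inr _, .inl _, .inl _, h₁, h₂, h₃ => h₁ (h₂.1.trans h₃).symm
  | .inl _, .inr _, .inr _, _, h₂, _ => h₂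
  | .inr _, .inl _, .inr _, _, _, h₃ => h₃
  | .inr _, .inr _, _, h₁, _, _ => h₁

theorem hubJoin_isLeft_of_pathGraph4 {A : V → V → Prop} {f : Fin 4 → (ι × V) ⊕ ι}
    (hf : ∀ x y, pathGraph4 x y ↔ (hubJoin ι A (f x) (f y) ∨ hubJoin ι A (f y) (f x)))
    (x : Fin 4) : (f x).isLeft := by
  have hub := pathGraph4_eq_false_of_independent_of_complete (fun x => (f x).isRight) ?_ ?_ x
  · simpa using hub
  · intro x y hxy hx hy
    obtain ⟨a, ha⟩ := Sum.isRight_iff.1 hx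
    obtain ⟨b, hb⟩ := Sum.isRight_iff.1 hy
    simpa [ha, hb, hubJoin] using (hf x y).1 hxy
  · intro x y hxy hx
    obtain ⟨a, ha⟩ := Sum.isRight_iff.1 hx
    by_contra hy
    obtain ⟨p, hp⟩ := Sum.isLeft_iff.1 (by simpa using hy)
    exact hxy ((hf x y).2 (by rw [ha, hp]; exact hubJoin_inr_or_inl A a p))

theorem not_hasInducedUCopy_pathGraph4_hubJoin {A : V → V → Prop}
    (hA : ¬ HasInducedUCopy A pathGraph4) : ¬ HasInducedUCopy (hubJoin ι A) pathGraph4 := by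
  rintro ⟨f, hf, hfP⟩
  choose p hp using fun x => Sum.isLeft_iff.1 (hubJoin_isLeft_of_pathGraph4 hfP x)
  simp only [hp, hubJoin_inl_inl] at hfP
  have hsucc : ∀ x y, pathGraph4 x y → (p x).1 = (p y).1 := fun x y hxy =>
    ((hfP x y).1 hxy).elim (·.1) (·.1.symm)
  have hcopy : ∀ x, (p x).1 = (p 0).1 := by
    have h₁ := hsucc 0 1 (.inl rfl)
    have h₂ := hsucc 1 2 (.inl rfl)
    have h₃ := hsucc 2 3 (.inl rfl)
    intro x
    fin_cases x <;> simp_all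
  refine hA ⟨fun x => (p x).2, fun x y hxy => hf ?_, fun x y => ?_⟩
  · rw [hp, hp, Prod.ext ((hcopy x).trans (hcopy y).symm) hxy]
  · simp only [hfP, hcopy x, hcopy y, true_and]

theorem hubJoin_not_isDicoloring [Fintype ι] {A : V → V → Prop} {k : ℕ}
    (hk : k + 1 < Fintype.card ι) (hA : ∀ c : V → Fin k, ¬ IsDicoloring A c)
    (c : (ι × V) ⊕ ι → Fin (k + 1)) : ¬ IsDicoloring (hubJoin ι A) c := by
  intro hc
  have hcopy (i : ι) : Surjective fun u => c (.inl (i, u)) :=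
    IsDicoloring.surjective hA <| hc.comp (g := fun u => .inl (i, u))
      (fun u v huv => by simpa using huv) fun _ _ huv => ⟨rfl, huv⟩
  obtain ⟨a, b, hab, hcab⟩ :=
    Fintype.exists_ne_map_eq_of_card_lt (fun a => c (.inr a)) (by simpa using hk)
  obtain ⟨u, hu⟩ := hcopy b (c (.inr a))
  obtain ⟨v, hv⟩ := hcopy a (c (.inr a))
  refine hc (hasDicycle_of_cycle4 (a := .inr a) (b := .inl (b, u)) (c := .inr b)
    (d := .inl (a, v)) ?_ ?_ ?_ ?_ ?_ ?_ ?_ ?_ ?_ ?_) <;> simp_all [hubJoin, Ne.symm hab]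

end HubJoin

theorem exists_dirTriangleFree_pathGraph4Free_not_dicolorable (k : ℕ) :
    ∃ (V : Type) (_ : Fintype V) (A : V → V → Prop), IsOrientedGraph A ∧ DirTriangleFree A ∧
      ¬ HasInducedUCopy A pathGraph4 ∧ ∀ c : V → Fin k, ¬ IsDicoloring A c := by
  induction k with
  | zero =>
    refine ⟨Unit, inferInstance, fun _ _ => False, fun _ _ h => h.elim, fun _ _ _ h => h.elim,
      ?_, fun c => (c ()).elim0⟩
    rintro ⟨f, hf, -⟩
    exact absurd (hf (Subsingleton.elim (f 0) (f 1))) (by decide)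
  | succ k ih =>
    obtain ⟨V, _, A, hor, htri, hP4, hcol⟩ := ih
    exact ⟨_, inferInstance, hubJoin (Fin (k + 2)) A, hor.hubJoin, htri.hubJoin,
      not_hasInducedUCopy_pathGraph4_hubJoin hP4, hubJoin_not_isDicoloring (by simp) hcol⟩

theorem not_heroic_C3_P4_general {h m : ℕ} (H : Fin h → Fin h → Prop) (F : Fin m → Fin m → Prop)
    (hHC3 : ∃ x y z : Fin h, x ≠ y ∧ y ≠ z ∧ x ≠ z ∧ H x y ∧ H y z ∧ H z x)
    (hFP4 : HasInducedUCopy F pathGraph4) :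
    ∀ c : ℕ, ∃ (n : ℕ) (A : Fin n → Fin n → Prop), IsOrientedGraph A ∧
      ¬ HasInducedCopy A H ∧ ¬ HasInducedCopy A F ∧ c < dichromaticNumber A := by
  intro c
  obtain ⟨V, _, A, hor, htri, hP4, hcol⟩ :=
    exists_dirTriangleFree_pathGraph4Free_not_dicolorable c
  let e := (Fintype.equivFin V).symm
  refine ⟨Fintype.card V, fun x y => A (e x) (e y), fun x y => hor (e x) (e y), ?_, ?_, ?_⟩
  · obtain ⟨x, y, z, -, -, -, hxyz⟩ := hHC3
    exact (htri.comap e).not_hasInducedCopy ⟨x, y, z, hxyz⟩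
  · exact fun hF => hP4 ((hF.hasInducedUCopy hFP4).of_comap e.injective)
  · refine lt_dichromaticNumber fun c' hc' => hcol (c' ∘ e.symm) (hc'.comp e.symm.injective ?_)
    simp

/-- If `H` contains a directed triangle as a subdigraph and `F` is an oriented forest whose
underlying graph has an induced path on 4 vertices, then `{↔K_2, H, F}` is not heroic. -/
theorem not_heroic_C3_P4 {h m : ℕ} (H : Fin h → Fin h → Prop) (F : Fin m → Fin m → Prop)
    (hHirr : Irreflexive H)
    (hHC3 : ∃ x y z : Fin h, x ≠ y ∧ y ≠ z ∧ x ≠ z ∧ H x y ∧ H y z ∧ H z x)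
    (hFor : IsOrientedGraph F)
    (hFforest : (underlyingGraph F).IsAcyclic)
    (hFP4 : HasInducedUCopy F pathGraph4) :
    ∀ c : ℕ, ∃ (n : ℕ) (A : Fin n → Fin n → Prop), IsOrientedGraph A ∧
      ¬ HasInducedCopy A H ∧ ¬ HasInducedCopy A F ∧ c < dichromaticNumber A :=
  not_heroic_C3_P4_general H F hHC3 hFP4
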